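/- Let φ, z, φx, φy, θx, θy be real numbers satisfying the complex equation cos(φ/2)·e^{iz/2} = cos(φx/2)·cos(φy/2) + e^{i(θx−θy)}·sin(φx/2)·sin(φy/2). Then cos φ = cos φx · cos φy + sin φx · sin φy · cos(θx − θy). (This identifies the first cylindrical coordinate of x⁻¹y in SU(2) with the spherical distance between the Hopf projections of x and y: the spherical law of cosines.) -/
import Mathlib

/-- The spherical law of cosines, from the cylindrical-coordinate
equation for `x⁻¹y` in `SU(2)`: if
`cos(φ/2)·e^{iz/2} = cos(φx/2)cos(φy/2) + e^{i(θx−θy)}·sin(φx/2)sin(φy/2)` (in `ℂ`),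
then `cos φ = cos φx cos φy + sin φx sin φy cos(θx − θy)`. -/
theorem spherical_law_of_cosines_from_su2 (φ z φx φy θx θy : ℝ)
    (h : (Real.cos (φ / 2) : ℂ) * Complex.exp (Complex.I * ((z / 2 : ℝ) : ℂ)) =
      (Real.cos (φx / 2) : ℂ) * (Real.cos (φy / 2) : ℂ) +
        Complex.exp (Complex.I * ((θx - θy : ℝ) : ℂ)) * (Real.sin (φx / 2) : ℂ) *
          (Real.sin (φy / 2) : ℂ)) :
    Real.cos φ =
      Real.cos φx * Real.cos φy + Real.sin φx * Real.sin φy * Real.cos (θx - θy) := by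
  rw [show Complex.I * ((z / 2 : ℝ) : ℂ) = ((z / 2 : ℝ) : ℂ) * Complex.I by ring,
      show Complex.I * ((θx - θy : ℝ) : ℂ) = ((θx - θy : ℝ) : ℂ) * Complex.I by ring,
      Complex.exp_mul_I, Complex.exp_mul_I] at h
  simp only [← Complex.ofReal_cos, ← Complex.ofReal_sin] at h
  rw [Complex.ext_iff] at h
  obtain ⟨h1, h2⟩ := h
  simp only [Complex.add_re, Complex.add_im, Complex.mul_re, Complex.mul_im,
    Complex.ofReal_re, Complex.ofReal_im, Complex.I_re, Complex.I_im] at h1 h2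
  ring_nf at h1 h2
  have hz := Real.sin_sq_add_cos_sq (z / 2)
  have hΔ := Real.sin_sq_add_cos_sq (θx - θy)
  have hφ := Real.cos_two_mul (φ / 2)
  have hφx := Real.cos_two_mul (φx / 2)
  have hφy := Real.cos_two_mul (φy / 2)
  have hsx := Real.sin_two_mul (φx / 2)
  have hsy := Real.sin_two_mul (φy / 2)
  rw [show 2 * (φ / 2) = φ by ring] at hφ
  rw [show 2 * (φx / 2) = φx by ring] at hφx hsx
  rw [show 2 * (φy / 2) = φy by ring] at hφy hsy
  have hx := Real.sin_sq_add_cos_sq (φx / 2)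
  have hy := Real.sin_sq_add_cos_sq (φy / 2)
  simp only [mul_one_div] at h1 h2
  have e1 := congrArg (· ^ 2) h1
  have e2 := congrArg (· ^ 2) h2
  have key : Real.cos (φ/2)^2 =
      (Real.cos (φx/2) * Real.cos (φy/2))^2 + (Real.sin (φx/2) * Real.sin (φy/2))^2 +
        2 * (Real.cos (φx/2) * Real.cos (φy/2)) * (Real.sin (φx/2) * Real.sin (φy/2)) *
          Real.cos (θx - θy) := by
    linear_combination e1 + e2 - Real.cos (φ/2)^2 * hz +
      (Real.sin (φx/2) * Real.sin (φy/2))^2 * hΔ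
  rw [hφ, hφx, hφy, hsx, hsy]
  nlinarith [key, hx, hy]
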